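/- arXiv:2602.18724 — 5 statements merged into one kernel-verified Lean document; each statement's English description precedes it below -/
import Mathlib

section
/- Let S be a finite set, π a fixed policy, Δ : S × S → ℝ≥0 a fixed symmetric nonnegative function, P^π(·|s) a transition kernel, c_R > 0, and c_T ∈ [0,1). Define the operator T on bounded functions d : S × S → ℝ≥0 by (Td)(s_i, s_j) = c_R·Δ(s_i,s_j) + c_T·W₁(d)(P^π(·|s_i), P^π(·|s_j)). Then T is a contraction with Lipschitz constant c_T with respect to the sup norm, and hence admits a unique fixed point. -/
open MeasureTheory ProbabilityTheory Finset

/-- A probability distribution on a finite set, given by a weight function. -/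
def IsProb {S : Type*} [Fintype S] (μ : S → ℝ) : Prop :=
  (∀ x, 0 ≤ μ x) ∧ ∑ x, μ x = 1

/-- A coupling of two distributions on a finite set. -/
def IsCoupling {S : Type*} [Fintype S] (μ ν : S → ℝ) (ζ : S → S → ℝ) : Prop :=
  (∀ x y, 0 ≤ ζ x y) ∧ (∀ x, ∑ y, ζ x y = μ x) ∧ (∀ y, ∑ x, ζ x y = ν y)

/-- The 1-Wasserstein distance with ground cost `d`, as the infimum of the
expected cost over all couplings. -/
noncomputable def W1 {S : Type*} [Fintype S] (d : S → S → ℝ) (μ ν : S → ℝ) : ℝ :=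
  sInf {c | ∃ ζ : S → S → ℝ, IsCoupling μ ν ζ ∧ c = ∑ x, ∑ y, ζ x y * d x y}

section Aux

variable {S : Type*} [Fintype S]

lemma coupling_total {μ ν : S → ℝ} {ζ : S → S → ℝ} (hμ : IsProb μ)
    (hζ : IsCoupling μ ν ζ) : ∑ x, ∑ y, ζ x y = 1 := by
  calc ∑ x, ∑ y, ζ x y = ∑ x, μ x := Finset.sum_congr rfl fun x _ => hζ.2.1 x
    _ = 1 := hμ.2

lemma W1_set_nonempty (d : S → S → ℝ) {μ ν : S → ℝ} (hμ : IsProb μ) (hν : IsProb ν) :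
    Set.Nonempty {c | ∃ ζ : S → S → ℝ, IsCoupling μ ν ζ ∧ c = ∑ x, ∑ y, ζ x y * d x y} := by
  refine ⟨_, fun x y => μ x * ν y, ⟨fun x y => mul_nonneg (hμ.1 x) (hν.1 y), ?_, ?_⟩, rfl⟩
  · intro x; rw [← Finset.mul_sum, hν.2, mul_one]
  · intro y; rw [← Finset.sum_mul, hμ.2, one_mul]

lemma cost_lb {μ ν : S → ℝ} {ζ : S → S → ℝ} (hμ : IsProb μ) (hζ : IsCoupling μ ν ζ)
    {d : S → S → ℝ} {m : ℝ} (hm : ∀ x y, m ≤ d x y) :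
    m ≤ ∑ x, ∑ y, ζ x y * d x y := by
  have h1 : ∑ x, ∑ y, ζ x y * m ≤ ∑ x, ∑ y, ζ x y * d x y :=
    Finset.sum_le_sum fun x _ => Finset.sum_le_sum fun y _ =>
      mul_le_mul_of_nonneg_left (hm x y) (hζ.1 x y)
  have h2 : ∑ x, ∑ y, ζ x y * m = (∑ x, ∑ y, ζ x y) * m := by
    rw [Finset.sum_mul]
    exact Finset.sum_congr rfl fun x _ => (Finset.sum_mul ..).symm
  rw [h2, coupling_total hμ hζ, one_mul] at h1
  exact h1

lemma W1_set_bddBelow [Nonempty S] (d : S → S → ℝ) {μ ν : S → ℝ} (hμ : IsProb μ) :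
    BddBelow {c | ∃ ζ : S → S → ℝ, IsCoupling μ ν ζ ∧ c = ∑ x, ∑ y, ζ x y * d x y} := by
  obtain ⟨p, hp⟩ := Finite.exists_min (fun p : S × S => d p.1 p.2)
  refine ⟨d p.1 p.2, ?_⟩
  rintro c ⟨ζ, hζ, rfl⟩
  exact cost_lb hμ hζ (fun x y => hp (x, y))

lemma W1_ge [Nonempty S] {d : S → S → ℝ} {μ ν : S → ℝ} (hμ : IsProb μ) (hν : IsProb ν)
    {m : ℝ} (hm : ∀ x y, m ≤ d x y) : m ≤ W1 d μ ν :=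
  le_csInf (W1_set_nonempty d hμ hν) (by rintro c ⟨ζ, hζ, rfl⟩; exact cost_lb hμ hζ hm)

lemma W1_le_add [Nonempty S] {d d' : S → S → ℝ} {μ ν : S → ℝ} (hμ : IsProb μ) (hν : IsProb ν)
    {B : ℝ} (hB : ∀ x y, d x y ≤ d' x y + B) :
    W1 d μ ν ≤ W1 d' μ ν + B := by
  have h : W1 d μ ν - B ≤ W1 d' μ ν := by
    apply le_csInf (W1_set_nonempty d' hμ hν)
    rintro c ⟨ζ, hζ, rfl⟩
    have h1 : W1 d μ ν ≤ ∑ x, ∑ y, ζ x y * d x y :=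
      csInf_le (W1_set_bddBelow d hμ) ⟨ζ, hζ, rfl⟩
    have h2 : ∑ x, ∑ y, ζ x y * d x y ≤ ∑ x, ∑ y, (ζ x y * d' x y + ζ x y * B) :=
      Finset.sum_le_sum fun x _ => Finset.sum_le_sum fun y _ => by
        have h0 := hζ.1 x y; nlinarith [hB x y]
    have h3 : ∑ x, ∑ y, (ζ x y * d' x y + ζ x y * B)
        = (∑ x, ∑ y, ζ x y * d' x y) + (∑ x, ∑ y, ζ x y) * B := by
      simp [Finset.sum_add_distrib, Finset.sum_mul]
    rw [coupling_total hμ hζ, one_mul] at h3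
    linarith
  linarith

lemma W1_abs_diff [Nonempty S] {d d' : S → S → ℝ} {μ ν : S → ℝ} (hμ : IsProb μ)
    (hν : IsProb ν) {B : ℝ} (hB : ∀ x y, |d x y - d' x y| ≤ B) :
    |W1 d μ ν - W1 d' μ ν| ≤ B := by
  rw [abs_le]
  constructor
  · have := W1_le_add (d := d') (d' := d) hμ hν (B := B) (fun x y => by
      have h := hB x y; rw [abs_le] at h; linarith [h.1])
    linarith
  · have := W1_le_add (d := d) (d' := d') hμ hν (B := B) (fun x y => by
      have h := hB x y; rw [abs_le] at h; linarith [h.2])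
    linarith

end Aux

/-- the predictive bisimulation operator is a `c_T`-contraction in
the sup norm and admits a unique fixed point. -/
theorem predictive_operator_contraction {S : Type*} [Fintype S] [Nonempty S]
    (Δ : S → S → ℝ) (hΔ : ∀ i j, 0 ≤ Δ i j) (hΔsymm : ∀ i j, Δ i j = Δ j i)
    (P : S → S → ℝ) (hP : ∀ s, IsProb (P s))
    (cR cT : ℝ) (hcR : 0 < cR) (hcT0 : 0 ≤ cT) (hcT1 : cT < 1)
    (T : (S → S → ℝ) → (S → S → ℝ))
    (hT : ∀ d i j, T d i j = cR * Δ i j + cT * W1 d (P i) (P j)) :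
    (∀ d d' : S → S → ℝ, (∀ i j, 0 ≤ d i j) → (∀ i j, 0 ≤ d' i j) →
        ∀ i j, |T d i j - T d' i j| ≤ cT * ⨆ p : S × S, |d p.1 p.2 - d' p.1 p.2|) ∧
      ∃! dstar : S → S → ℝ, (∀ i j, 0 ≤ dstar i j) ∧ ∀ i j, dstar i j = T dstar i j := by
  have key : ∀ (d d' : S → S → ℝ) (B : ℝ), (∀ x y, |d x y - d' x y| ≤ B) →
      ∀ i j, |T d i j - T d' i j| ≤ cT * B := by
    intro d d' B hB i j
    rw [hT, hT]
    have h := W1_abs_diff (hP i) (hP j) hB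
    have he : cR * Δ i j + cT * W1 d (P i) (P j) - (cR * Δ i j + cT * W1 d' (P i) (P j))
        = cT * (W1 d (P i) (P j) - W1 d' (P i) (P j)) := by ring
    rw [he, abs_mul, abs_of_nonneg hcT0]
    exact mul_le_mul_of_nonneg_left h hcT0
  constructor
  · intro d d' _ _ i j
    apply key
    intro x y
    exact le_ciSup (Finite.bddAbove_range fun p : S × S => |d p.1 p.2 - d' p.1 p.2|) (x, y)
  · set K : NNReal := ⟨cT, hcT0⟩ with hK
    have hlip : LipschitzWith K T := by
      apply LipschitzWith.of_dist_le_mul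
      intro d d'
      have hnn : (0:ℝ) ≤ (K : ℝ) * dist d d' := mul_nonneg hcT0 dist_nonneg
      rw [dist_pi_le_iff hnn]
      intro i
      rw [dist_pi_le_iff hnn]
      intro j
      rw [Real.dist_eq]
      apply key
      intro x y
      calc |d x y - d' x y| = dist (d x y) (d' x y) := (Real.dist_eq _ _).symm
        _ ≤ dist (d x) (d' x) := dist_le_pi_dist (d x) (d' x) y
        _ ≤ dist d d' := dist_le_pi_dist d d' x
    have hcontr : ContractingWith K T := ⟨by exact_mod_cast hcT1, hlip⟩
    set dstar := ContractingWith.fixedPoint T hcontr with hdstar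
    have hfix : T dstar = dstar := hcontr.fixedPoint_isFixedPt
    obtain ⟨p, hp⟩ := Finite.exists_min (fun p : S × S => dstar p.1 p.2)
    have hmin : ∀ i j, dstar p.1 p.2 ≤ dstar i j := fun i j => hp (i, j)
    have hm0 : 0 ≤ dstar p.1 p.2 := by
      by_contra hneg
      push_neg at hneg
      have hW : dstar p.1 p.2 ≤ W1 dstar (P p.1) (P p.2) :=
        W1_ge (hP p.1) (hP p.2) hmin
      have heq := congrFun (congrFun hfix p.1) p.2
      rw [hT] at heq
      have hΔp := mul_nonneg hcR.le (hΔ p.1 p.2)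
      have hmm := mul_le_mul_of_nonneg_left hW hcT0
      nlinarith
    have hnn : ∀ i j, 0 ≤ dstar i j := fun i j => hm0.trans (hmin i j)
    refine ⟨dstar, ⟨hnn, fun i j => (congrFun (congrFun hfix i) j).symm⟩, ?_⟩
    rintro d' ⟨hd'nn, hd'fix⟩
    set B := ⨆ q : S × S, |d' q.1 q.2 - dstar q.1 q.2| with hBdef
    have hBle : ∀ i j, |d' i j - dstar i j| ≤ B := fun i j =>
      le_ciSup (Finite.bddAbove_range fun q : S × S => |d' q.1 q.2 - dstar q.1 q.2|) (i, j)
    have hB0 : 0 ≤ B :=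
      le_trans (abs_nonneg _) (hBle (Classical.arbitrary S) (Classical.arbitrary S))
    have hBcT : B ≤ cT * B := by
      rw [hBdef]
      apply ciSup_le
      intro q
      have hk := key d' dstar B hBle q.1 q.2
      calc |d' q.1 q.2 - dstar q.1 q.2| = |T d' q.1 q.2 - T dstar q.1 q.2| := by
            rw [← hd'fix q.1 q.2, congrFun (congrFun hfix q.1) q.2]
        _ ≤ cT * B := hk
    have hB0' : B ≤ 0 := by nlinarith
    funext i j
    have h := hBle i j
    have : |d' i j - dstar i j| ≤ 0 := le_trans h hB0'
    have := abs_nonpos_iff.mp this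
    linarith [sub_eq_zero.mp this]
end

section
/- Let S be a finite state space, π a policy, r : S × A → ℝ bounded rewards, γ ∈ [0,1), and let the value iterates be V₀ ≡ 0, V_{n+1}(s) = E_{a∼π(·|s)}[r(s,a)] + γ·E_{s'∼P^π(·|s)}[V_n(s')]. Let d₀ ≡ 0 and d_{n+1}(s_i,s_j) = Δ_R(s_i,s_j) + γ·W₁(d_n)(P^π(·|s_i), P^π(·|s_j)), where Δ_R(s_i,s_j) = E_{a_i,a_j∼π}[|r̂(s_i,a_i) − r̂(s_j,a_j)|] for a random reward model r̂ with E[r̂(s,a)] = r(s,a). Then for all n ≥ 0 and all s_i, s_j: |V_n(s_i) − V_n(s_j)| ≤ d_n(s_i, s_j). -/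
open MeasureTheory ProbabilityTheory Finset

lemma key {S : Type*} [Fintype S] (d : S → S → ℝ) (μ ν : S → ℝ)
    (hμ : IsProb μ) (hν : IsProb ν) (f : S → ℝ)
    (hf : ∀ x y, |f x - f y| ≤ d x y) :
    |∑ x, μ x * f x - ∑ y, ν y * f y| ≤ W1 d μ ν := by
  apply le_csInf
  · refine ⟨_, fun x y => μ x * ν y, ⟨fun x y => mul_nonneg (hμ.1 x) (hν.1 y), ?_, ?_⟩, rfl⟩
    · intro x; rw [← Finset.mul_sum, hν.2, mul_one]
    · intro y; rw [← Finset.sum_mul, hμ.2, one_mul]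
  · rintro c ⟨ζ, ⟨hζ0, hζμ, hζν⟩, rfl⟩
    have h1 : ∑ x, μ x * f x = ∑ x, ∑ y, ζ x y * f x := by
      refine Finset.sum_congr rfl fun x _ => ?_
      rw [← hζμ x, Finset.sum_mul]
    have h2 : ∑ y, ν y * f y = ∑ x, ∑ y, ζ x y * f y := by
      rw [Finset.sum_comm]
      refine Finset.sum_congr rfl fun y _ => ?_
      rw [← hζν y, Finset.sum_mul]
    rw [h1, h2, ← Finset.sum_sub_distrib]
    calc |∑ x, (∑ y, ζ x y * f x - ∑ y, ζ x y * f y)|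
        ≤ ∑ x, |∑ y, ζ x y * f x - ∑ y, ζ x y * f y| := Finset.abs_sum_le_sum_abs _ _
      _ ≤ ∑ x, ∑ y, ζ x y * d x y := by
          refine Finset.sum_le_sum fun x _ => ?_
          rw [← Finset.sum_sub_distrib]
          calc |∑ y, (ζ x y * f x - ζ x y * f y)|
              ≤ ∑ y, |ζ x y * f x - ζ x y * f y| := Finset.abs_sum_le_sum_abs _ _
            _ ≤ ∑ y, ζ x y * d x y := by
                refine Finset.sum_le_sum fun y _ => ?_
                rw [← mul_sub, abs_mul, abs_of_nonneg (hζ0 x y)]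
                exact mul_le_mul_of_nonneg_left (hf x y) (hζ0 x y)

/-- the value-iteration differences are bounded by the metric
iterates of the predictive bisimulation operator (with unbiased reward model). -/
theorem value_diff_le_metric_iterates
    {S A : Type*} [Fintype S] [Fintype A]
    {Ω : Type*} [MeasurableSpace Ω] (P : Measure Ω) [IsProbabilityMeasure P]
    (pol : S → A → ℝ) (hpol : ∀ s, IsProb (pol s))
    (Pk : S → S → ℝ) (hPk : ∀ s, IsProb (Pk s))
    (r : S → A → ℝ) (rhat : S → A → Ω → ℝ)
    (hint : ∀ s a, Integrable (rhat s a) P)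
    (hmean : ∀ s a, (∫ ω, rhat s a ω ∂P) = r s a)
    (γ : ℝ) (hγ0 : 0 ≤ γ) (hγ1 : γ < 1)
    (V : ℕ → S → ℝ) (hV0 : ∀ s, V 0 s = 0)
    (hVs : ∀ n s, V (n + 1) s =
      (∑ a, pol s a * r s a) + γ * ∑ s', Pk s s' * V n s')
    (ΔR : S → S → ℝ)
    (hΔR : ∀ i j, ΔR i j =
      ∑ ai, ∑ aj, pol i ai * pol j aj * ∫ ω, |rhat i ai ω - rhat j aj ω| ∂P)
    (d : ℕ → S → S → ℝ) (hd0 : ∀ i j, d 0 i j = 0)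
    (hds : ∀ n i j, d (n + 1) i j = ΔR i j + γ * W1 (d n) (Pk i) (Pk j)) :
    ∀ n i j, |V n i - V n j| ≤ d n i j := by
  intro n
  induction n with
  | zero => intro i j; simp [hV0, hd0]
  | succ n ih =>
    intro i j
    rw [hVs n i, hVs n j, hds n i j]
    -- reward term bound
    have hr : ∀ ai aj, |r i ai - r j aj| ≤ ∫ ω, |rhat i ai ω - rhat j aj ω| ∂P := by
      intro ai aj
      rw [← hmean i ai, ← hmean j aj, ← integral_sub (hint i ai) (hint j aj)]
      simpa [Real.norm_eq_abs] using
        norm_integral_le_integral_norm (fun ω => rhat i ai ω - rhat j aj ω) (μ := P)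
    have h1 : ∑ a, pol i a * r i a = ∑ ai, ∑ aj, pol i ai * pol j aj * r i ai := by
      refine Finset.sum_congr rfl fun ai _ => ?_
      have : ∑ aj, pol i ai * pol j aj * r i ai
          = (pol i ai * r i ai) * ∑ aj, pol j aj := by
        rw [Finset.mul_sum]; exact Finset.sum_congr rfl fun aj _ => by ring
      rw [this, (hpol j).2, mul_one]
    have h2 : ∑ a, pol j a * r j a = ∑ ai, ∑ aj, pol i ai * pol j aj * r j aj := by
      have : ∀ ai, ∑ aj, pol i ai * pol j aj * r j aj
          = pol i ai * ∑ aj, pol j aj * r j aj := by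
        intro ai
        rw [Finset.mul_sum]; exact Finset.sum_congr rfl fun aj _ => by ring
      rw [Finset.sum_congr rfl fun ai _ => this ai, ← Finset.sum_mul, (hpol i).2, one_mul]
    have hR : |(∑ a, pol i a * r i a) - ∑ a, pol j a * r j a| ≤ ΔR i j := by
      rw [h1, h2, hΔR, ← Finset.sum_sub_distrib]
      calc |∑ ai, (∑ aj, pol i ai * pol j aj * r i ai
              - ∑ aj, pol i ai * pol j aj * r j aj)|
          ≤ ∑ ai, |∑ aj, pol i ai * pol j aj * r i ai
              - ∑ aj, pol i ai * pol j aj * r j aj| := Finset.abs_sum_le_sum_abs _ _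
        _ ≤ ∑ ai, ∑ aj, pol i ai * pol j aj * ∫ ω, |rhat i ai ω - rhat j aj ω| ∂P := by
            refine Finset.sum_le_sum fun ai _ => ?_
            rw [← Finset.sum_sub_distrib]
            refine le_trans (Finset.abs_sum_le_sum_abs _ _) (Finset.sum_le_sum fun aj _ => ?_)
            have hpp : 0 ≤ pol i ai * pol j aj :=
              mul_nonneg ((hpol i).1 ai) ((hpol j).1 aj)
            rw [← mul_sub, abs_mul, abs_of_nonneg hpp]
            exact mul_le_mul_of_nonneg_left (hr ai aj) hpp
    have hT := key (d n) (Pk i) (Pk j) (hPk i) (hPk j) (V n) ih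
    calc |((∑ a, pol i a * r i a) + γ * ∑ s', Pk i s' * V n s')
            - ((∑ a, pol j a * r j a) + γ * ∑ s', Pk j s' * V n s')|
        = |((∑ a, pol i a * r i a) - ∑ a, pol j a * r j a)
            + γ * ((∑ s', Pk i s' * V n s') - ∑ s', Pk j s' * V n s')| := by ring_nf
      _ ≤ |(∑ a, pol i a * r i a) - ∑ a, pol j a * r j a|
            + |γ * ((∑ s', Pk i s' * V n s') - ∑ s', Pk j s' * V n s')| := abs_add_le _ _
      _ ≤ ΔR i j + γ * W1 (d n) (Pk i) (Pk j) := by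
            rw [abs_mul, abs_of_nonneg hγ0]
            exact add_le_add hR (mul_le_mul_of_nonneg_left hT hγ0)
end

section
/- Let V^π be the fixed point of the Bellman evaluation operator and d̃ the fixed point of the predictive bisimulation operator with c_R = 1 and c_T = γ ∈ [0,1), where the predictive reward model r̂ is unbiased: E[r̂(s,a)] = r(s,a). Then for all states s_i, s_j: |V^π(s_i) − V^π(s_j)| ≤ d̃(s_i, s_j). -/
open MeasureTheory ProbabilityTheory Finset

/-- the value-difference bound for the fixed points: the
difference of state values under π is bounded by the predictive bisimulation
metric (cR = 1, cT = γ), given an unbiased predictive reward model. -/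
theorem value_difference_bound
    {S A : Type*} [Fintype S] [Fintype A]
    {Ω : Type*} [MeasurableSpace Ω] (P : Measure Ω) [IsProbabilityMeasure P]
    (pol : S → A → ℝ) (hpol : ∀ s, IsProb (pol s))
    (Pk : S → S → ℝ) (hPk : ∀ s, IsProb (Pk s))
    (r : S → A → ℝ) (rhat : S → A → Ω → ℝ)
    (hint : ∀ s a, Integrable (rhat s a) P)
    (hmean : ∀ s a, (∫ ω, rhat s a ω ∂P) = r s a)
    (γ : ℝ) (hγ0 : 0 ≤ γ) (hγ1 : γ < 1)
    (V : S → ℝ)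
    (hV : ∀ s, V s = (∑ a, pol s a * r s a) + γ * ∑ s', Pk s s' * V s')
    (ΔR : S → S → ℝ)
    (hΔR : ∀ i j, ΔR i j =
      ∑ ai, ∑ aj, pol i ai * pol j aj * ∫ ω, |rhat i ai ω - rhat j aj ω| ∂P)
    (dt : S → S → ℝ)
    (hdt : ∀ i j, dt i j = ΔR i j + γ * W1 dt (Pk i) (Pk j)) :
    ∀ i j, |V i - V j| ≤ dt i j := by
  intro i j
  classical
  set f : S × S → ℝ := fun p => |V p.1 - V p.2| - dt p.1 p.2 with hf
  have hne : (Finset.univ : Finset (S × S)).Nonempty := ⟨(i, j), Finset.mem_univ _⟩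
  set M := Finset.univ.sup' hne f with hM
  have hle : ∀ a b : S, |V a - V b| - dt a b ≤ M := fun a b =>
    Finset.le_sup' f (Finset.mem_univ (a, b))
  -- Step 1: reward difference bound
  have hrew : ∀ a b : S,
      |(∑ x, pol a x * r a x) - ∑ x, pol b x * r b x| ≤ ΔR a b := by
    intro a b
    have h1 : (∑ x, pol a x * r a x)
        = ∑ ai, ∑ aj, pol a ai * pol b aj * r a ai := by
      rw [eq_comm]
      refine Finset.sum_congr rfl (fun ai _ => ?_)
      have : ∀ aj, pol a ai * pol b aj * r a ai
          = pol b aj * (pol a ai * r a ai) := fun _ => by ring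
      simp_rw [this, ← Finset.sum_mul, (hpol b).2, one_mul]
    have h2 : (∑ x, pol b x * r b x)
        = ∑ ai, ∑ aj, pol a ai * pol b aj * r b aj := by
      rw [eq_comm]
      rw [Finset.sum_comm]
      refine Finset.sum_congr rfl (fun aj _ => ?_)
      have : ∀ ai, pol a ai * pol b aj * r b aj
          = pol a ai * (pol b aj * r b aj) := fun _ => by ring
      simp_rw [this, ← Finset.sum_mul, (hpol a).2, one_mul]
    rw [h1, h2, ← Finset.sum_sub_distrib]
    simp_rw [← Finset.sum_sub_distrib, ← mul_sub]
    rw [hΔR]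
    calc |∑ ai, ∑ aj, pol a ai * pol b aj * (r a ai - r b aj)|
        ≤ ∑ ai, ∑ aj, |pol a ai * pol b aj * (r a ai - r b aj)| := by
          refine (Finset.abs_sum_le_sum_abs _ _).trans ?_
          exact Finset.sum_le_sum fun ai _ => Finset.abs_sum_le_sum_abs _ _
      _ ≤ ∑ ai, ∑ aj, pol a ai * pol b aj * ∫ ω, |rhat a ai ω - rhat b aj ω| ∂P := by
          refine Finset.sum_le_sum fun ai _ => Finset.sum_le_sum fun aj _ => ?_
          rw [abs_mul, abs_of_nonneg (mul_nonneg ((hpol a).1 ai) ((hpol b).1 aj))]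
          refine mul_le_mul_of_nonneg_left ?_
            (mul_nonneg ((hpol a).1 ai) ((hpol b).1 aj))
          have heq : r a ai - r b aj = ∫ ω, (rhat a ai ω - rhat b aj ω) ∂P := by
            rw [integral_sub (hint a ai) (hint b aj), hmean, hmean]
          rw [heq]
          have := norm_integral_le_integral_norm (μ := P)
            (fun ω => rhat a ai ω - rhat b aj ω)
          simpa [Real.norm_eq_abs] using this
  -- Step 2: transition difference bound via couplings
  have htr : ∀ a b : S,
      |(∑ s', Pk a s' * V s') - ∑ s', Pk b s' * V s'|
        ≤ W1 dt (Pk a) (Pk b) + M := by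
    intro a b
    have hsetne : {c | ∃ ζ : S → S → ℝ, IsCoupling (Pk a) (Pk b) ζ
        ∧ c = ∑ x, ∑ y, ζ x y * dt x y}.Nonempty := by
      refine ⟨∑ x, ∑ y, (Pk a x * Pk b y) * dt x y,
        fun x y => Pk a x * Pk b y, ⟨?_, ?_, ?_⟩, rfl⟩
      · exact fun x y => mul_nonneg ((hPk a).1 x) ((hPk b).1 y)
      · intro x; rw [← Finset.mul_sum, (hPk b).2, mul_one]
      · intro y; rw [← Finset.sum_mul, (hPk a).2, one_mul]
    have hlb : ∀ c ∈ {c | ∃ ζ : S → S → ℝ, IsCoupling (Pk a) (Pk b) ζ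
        ∧ c = ∑ x, ∑ y, ζ x y * dt x y},
        |(∑ s', Pk a s' * V s') - ∑ s', Pk b s' * V s'| - M ≤ c := by
      rintro c ⟨ζ, ⟨hζ0, hζr, hζc⟩, rfl⟩
      have hTa : (∑ s', Pk a s' * V s') = ∑ x, ∑ y, ζ x y * V x := by
        refine Finset.sum_congr rfl fun x _ => ?_
        rw [← hζr x, Finset.sum_mul]
      have hTb : (∑ s', Pk b s' * V s') = ∑ x, ∑ y, ζ x y * V y := by
        rw [Finset.sum_comm]
        refine Finset.sum_congr rfl fun y _ => ?_
        rw [← hζc y, Finset.sum_mul]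
      have hmass : (∑ x, ∑ y, ζ x y) = 1 := by
        calc (∑ x, ∑ y, ζ x y) = ∑ x, Pk a x := Finset.sum_congr rfl fun x _ => hζr x
          _ = 1 := (hPk a).2
      have hbound : |(∑ s', Pk a s' * V s') - ∑ s', Pk b s' * V s'|
          ≤ (∑ x, ∑ y, ζ x y * dt x y) + M := by
        rw [hTa, hTb, ← Finset.sum_sub_distrib]
        simp_rw [← Finset.sum_sub_distrib, ← mul_sub]
        calc |∑ x, ∑ y, ζ x y * (V x - V y)|
            ≤ ∑ x, ∑ y, |ζ x y * (V x - V y)| := by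
              refine (Finset.abs_sum_le_sum_abs _ _).trans ?_
              exact Finset.sum_le_sum fun x _ => Finset.abs_sum_le_sum_abs _ _
          _ ≤ ∑ x, ∑ y, ζ x y * (dt x y + M) := by
              refine Finset.sum_le_sum fun x _ => Finset.sum_le_sum fun y _ => ?_
              rw [abs_mul, abs_of_nonneg (hζ0 x y)]
              refine mul_le_mul_of_nonneg_left ?_ (hζ0 x y)
              have := hle x y
              linarith [abs_abs (V x - V y)]
          _ = (∑ x, ∑ y, ζ x y * dt x y) + M := by
              have : ∀ x, (∑ y, ζ x y * (dt x y + M))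
                  = (∑ y, ζ x y * dt x y) + (∑ y, ζ x y) * M := by
                intro x
                rw [Finset.sum_mul, ← Finset.sum_add_distrib]
                exact Finset.sum_congr rfl fun y _ => by ring
              simp_rw [this]
              rw [Finset.sum_add_distrib, ← Finset.sum_mul, hmass, one_mul]
      linarith
    have := le_csInf hsetne hlb
    unfold W1
    linarith
  -- Step 3: combine
  have key : ∀ a b : S, |V a - V b| ≤ dt a b + γ * M := by
    intro a b
    have hVab : V a - V b = ((∑ x, pol a x * r a x) - ∑ x, pol b x * r b x)
        + γ * ((∑ s', Pk a s' * V s') - ∑ s', Pk b s' * V s') := by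
      rw [hV a, hV b]; ring
    calc |V a - V b|
        ≤ |(∑ x, pol a x * r a x) - ∑ x, pol b x * r b x|
          + γ * |(∑ s', Pk a s' * V s') - ∑ s', Pk b s' * V s'| := by
          rw [hVab]
          refine (abs_add_le _ _).trans ?_
          rw [abs_mul, abs_of_nonneg hγ0]
      _ ≤ ΔR a b + γ * (W1 dt (Pk a) (Pk b) + M) := by
          have := hrew a b
          have := htr a b
          nlinarith [mul_le_mul_of_nonneg_left (htr a b) hγ0]
      _ = dt a b + γ * M := by rw [hdt a b]; ring
  have hMγ : M ≤ γ * M := by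
    obtain ⟨p, -, hp⟩ := Finset.exists_mem_eq_sup' hne f
    have hMeq : M = |V p.1 - V p.2| - dt p.1 p.2 := hM.trans hp
    have := key p.1 p.2
    linarith
  have hM0 : M ≤ 0 := by
    by_contra h
    push_neg at h
    have := mul_lt_mul_of_pos_right hγ1 h
    rw [one_mul] at this
    linarith
  have := hle i j
  have := key i j
  nlinarith [mul_nonneg hγ0 (neg_nonneg.mpr hM0)]
end

section
/- Let M = (S, A, P, r, γ) be an MDP with γ ∈ [0,1), Φ : S → ℝ a bounded potential function, η ∈ ℝ, and define the shaped reward r'(s,a,s') = r(s,a,s') + η·(γΦ(s') − Φ(s)). Let M' = (S, A, P, r', γ). Then the optimal action-value functions satisfy Q*_{M'}(s,a) = Q*_M(s,a) − η·Φ(s) for all s ∈ S, a ∈ A. -/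
open MeasureTheory ProbabilityTheory Finset

/-- potential-based reward shaping shifts the optimal
action-value function by −η·Φ(s). -/
theorem shaping_optimal_Q_identity
    {S A : Type*} [Fintype S] [Fintype A] [Nonempty A]
    (P : S → A → S → ℝ) (hP : ∀ s a, IsProb (P s a))
    (r : S → A → S → ℝ) (γ : ℝ) (hγ0 : 0 ≤ γ) (hγ1 : γ < 1)
    (Φ : S → ℝ) (η : ℝ)
    (r' : S → A → S → ℝ)
    (hr' : ∀ s a s', r' s a s' = r s a s' + η * (γ * Φ s' - Φ s))
    (Q Q' : S → A → ℝ)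
    (hQ : ∀ s a, Q s a = ∑ s', P s a s' *
      (r s a s' + γ * (Finset.univ.sup' Finset.univ_nonempty fun a' => Q s' a')))
    (hQ' : ∀ s a, Q' s a = ∑ s', P s a s' *
      (r' s a s' + γ * (Finset.univ.sup' Finset.univ_nonempty fun a' => Q' s' a'))) :
    ∀ s a, Q' s a = Q s a - η * Φ s := by

  -- The shaped candidate
  set Qh : S → A → ℝ := fun s a => Q s a - η * Φ s with hQhdef
  have hsup : ∀ s', (Finset.univ.sup' Finset.univ_nonempty fun a' => Qh s' a')
      = (Finset.univ.sup' Finset.univ_nonempty fun a' => Q s' a') - η * Φ s' := by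
    intro s'
    apply le_antisymm
    · apply Finset.sup'_le
      intro a _
      exact sub_le_sub_right (Finset.le_sup' _ (Finset.mem_univ a)) _
    · rw [sub_le_iff_le_add]
      apply Finset.sup'_le
      intro a _
      rw [← sub_le_iff_le_add]
      exact Finset.le_sup' (fun a' => Qh s' a') (Finset.mem_univ a)
  have hQh : ∀ s a, Qh s a = ∑ s', P s a s' *
      (r' s a s' + γ * (Finset.univ.sup' Finset.univ_nonempty fun a' => Qh s' a')) := by
    intro s a
    have h1 : (∑ s', P s a s' *
        (r' s a s' + γ * (Finset.univ.sup' Finset.univ_nonempty fun a' => Qh s' a')))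
        = (∑ s', P s a s' *
            (r s a s' + γ * (Finset.univ.sup' Finset.univ_nonempty fun a' => Q s' a')))
          - (∑ s', P s a s') * (η * Φ s) := by
      rw [Finset.sum_mul, ← Finset.sum_sub_distrib]
      apply Finset.sum_congr rfl
      intro s' _
      rw [hr', hsup]
      ring
    rw [h1, (hP s a).2, one_mul, ← hQ]
  -- uniqueness of the fixed point
  intro s₀ a₀
  haveI : Nonempty S := ⟨s₀⟩
  haveI : Nonempty (S × A) := inferInstance
  set M : ℝ := Finset.univ.sup' Finset.univ_nonempty (fun p : S × A => |Q' p.1 p.2 - Qh p.1 p.2|)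
    with hMdef
  have hMle : ∀ s a, |Q' s a - Qh s a| ≤ M :=
    fun s a => Finset.le_sup' (fun p : S × A => |Q' p.1 p.2 - Qh p.1 p.2|) (Finset.mem_univ (s, a))
  have hsupM : ∀ s', |(Finset.univ.sup' Finset.univ_nonempty fun a' => Q' s' a')
      - (Finset.univ.sup' Finset.univ_nonempty fun a' => Qh s' a')| ≤ M := by
    intro s'
    rw [abs_sub_le_iff]
    constructor
    · rw [sub_le_iff_le_add]
      apply Finset.sup'_le
      intro a _
      have := hMle s' a
      have h2 : Q' s' a ≤ Qh s' a + M := by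
        have := (abs_sub_le_iff.mp this).1; linarith
      have h3 := Finset.le_sup' (fun a' => Qh s' a') (Finset.mem_univ a)
      linarith
    · rw [sub_le_iff_le_add]
      apply Finset.sup'_le
      intro a _
      have := hMle s' a
      have h2 : Qh s' a ≤ Q' s' a + M := by
        have := (abs_sub_le_iff.mp this).2; linarith
      have h3 := Finset.le_sup' (fun a' => Q' s' a') (Finset.mem_univ a)
      linarith
  have hM0 : 0 ≤ M := le_trans (abs_nonneg _) (hMle s₀ a₀)
  have key : ∀ s a, |Q' s a - Qh s a| ≤ γ * M := by
    intro s a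
    have hdiff : Q' s a - Qh s a = ∑ s', P s a s' *
        (γ * ((Finset.univ.sup' Finset.univ_nonempty fun a' => Q' s' a')
          - (Finset.univ.sup' Finset.univ_nonempty fun a' => Qh s' a'))) := by
      rw [hQ' s a, hQh s a, ← Finset.sum_sub_distrib]
      apply Finset.sum_congr rfl
      intro s' _
      ring
    rw [hdiff]
    calc |∑ s', P s a s' *
        (γ * ((Finset.univ.sup' Finset.univ_nonempty fun a' => Q' s' a')
          - (Finset.univ.sup' Finset.univ_nonempty fun a' => Qh s' a')))|
        ≤ ∑ s', |P s a s' *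
        (γ * ((Finset.univ.sup' Finset.univ_nonempty fun a' => Q' s' a')
          - (Finset.univ.sup' Finset.univ_nonempty fun a' => Qh s' a')))| :=
          Finset.abs_sum_le_sum_abs _ _
      _ ≤ ∑ s', P s a s' * (γ * M) := by
          apply Finset.sum_le_sum
          intro s' _
          rw [abs_mul, abs_of_nonneg ((hP s a).1 s'), abs_mul, abs_of_nonneg hγ0]
          exact mul_le_mul_of_nonneg_left
            (mul_le_mul_of_nonneg_left (hsupM s') hγ0) ((hP s a).1 s')
      _ = γ * M := by rw [← Finset.sum_mul, (hP s a).2, one_mul]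
  have hMγ : M ≤ γ * M := by
    apply Finset.sup'_le
    intro p _
    exact key p.1 p.2
  have hMzero : M ≤ 0 := by nlinarith
  have h := le_antisymm (le_trans (hMle s₀ a₀) hMzero) (abs_nonneg _)
  have : Q' s₀ a₀ - Qh s₀ a₀ = 0 := abs_eq_zero.mp h
  have : Q' s₀ a₀ = Qh s₀ a₀ := by linarith
  simpa [hQhdef] using this
end

section
/- Let M = (S, A, P, r, γ) and the shaped MDP M' with r' = r + η·(γΦ(s') − Φ(s)). Then for any stationary policy π, the value functions satisfy V^π_{M'}(s) = V^π_M(s) − η·Φ(s) for all s. -/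
open MeasureTheory ProbabilityTheory Finset

/-- potential-based shaping shifts the value of every stationary
policy by −η·Φ(s). -/
theorem shaping_policy_value_identity
    {S A : Type*} [Fintype S] [Fintype A]
    (P : S → A → S → ℝ) (hP : ∀ s a, IsProb (P s a))
    (r : S → A → S → ℝ) (γ : ℝ) (hγ0 : 0 ≤ γ) (hγ1 : γ < 1)
    (Φ : S → ℝ) (η : ℝ)
    (r' : S → A → S → ℝ)
    (hr' : ∀ s a s', r' s a s' = r s a s' + η * (γ * Φ s' - Φ s))
    (pol : S → A → ℝ) (hpol : ∀ s, IsProb (pol s))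
    (V V' : S → ℝ)
    (hV : ∀ s, V s = ∑ a, pol s a * ∑ s', P s a s' * (r s a s' + γ * V s'))
    (hV' : ∀ s, V' s = ∑ a, pol s a * ∑ s', P s a s' * (r' s a s' + γ * V' s')) :
    ∀ s, V' s = V s - η * Φ s := by
  set D : S → ℝ := fun s => V' s - (V s - η * Φ s) with hDdef
  have key : ∀ s, D s = γ * ∑ a, pol s a * ∑ s', P s a s' * D s' := by
    intro s
    have ha : ∀ a, ∑ s', P s a s' * (r' s a s' + γ * V' s')
        = (∑ s', P s a s' * (r s a s' + γ * V s'))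
          + γ * (∑ s', P s a s' * D s') - η * Φ s := by
      intro a
      have hsum := (hP s a).2
      have hpt : ∀ s', P s a s' * (r' s a s' + γ * V' s')
          = P s a s' * (r s a s' + γ * V s')
            + γ * (P s a s' * D s') - η * Φ s * P s a s' := by
        intro s'
        rw [hr']
        simp only [hDdef]
        ring
      rw [Finset.sum_congr rfl (fun s' _ => hpt s'), Finset.sum_sub_distrib,
        Finset.sum_add_distrib, ← Finset.mul_sum, ← Finset.mul_sum, hsum]
      ring
    have hpolsum := (hpol s).2
    have h2 : V' s = (∑ a, pol s a * ∑ s', P s a s' * (r s a s' + γ * V s'))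
        + γ * (∑ a, pol s a * ∑ s', P s a s' * D s') - η * Φ s := by
      rw [hV' s]
      have hpt : ∀ a, pol s a * (∑ s', P s a s' * (r' s a s' + γ * V' s'))
          = pol s a * (∑ s', P s a s' * (r s a s' + γ * V s'))
            + γ * (pol s a * ∑ s', P s a s' * D s') - η * Φ s * pol s a := by
        intro a; rw [ha a]; ring
      rw [Finset.sum_congr rfl (fun a _ => hpt a), Finset.sum_sub_distrib,
        Finset.sum_add_distrib, ← Finset.mul_sum, ← Finset.mul_sum, hpolsum]
      rw [Finset.mul_sum]
      ring
    have h1 := hV s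
    simp only [hDdef]
    rw [h2, ← h1]
    ring
  intro s
  obtain ⟨s0, -, hs0⟩ := Finset.exists_max_image Finset.univ (fun t => |D t|)
    ⟨s, Finset.mem_univ s⟩
  have hbound : ∀ t, |D t| ≤ |D s0| := fun t => hs0 t (Finset.mem_univ t)
  have hDs0 : |D s0| ≤ γ * |D s0| := by
    have hinner : ∀ a, |∑ s', P s0 a s' * D s'| ≤ |D s0| := by
      intro a
      calc |∑ s', P s0 a s' * D s'| ≤ ∑ s', |P s0 a s' * D s'| :=
            Finset.abs_sum_le_sum_abs _ _
        _ ≤ ∑ s' : S, P s0 a s' * |D s0| := by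
            apply Finset.sum_le_sum
            intro s' _
            rw [abs_mul, abs_of_nonneg ((hP s0 a).1 s')]
            exact mul_le_mul_of_nonneg_left (hbound s') ((hP s0 a).1 s')
        _ = |D s0| := by rw [← Finset.sum_mul, (hP s0 a).2, one_mul]
    calc |D s0| = γ * |∑ a, pol s0 a * ∑ s', P s0 a s' * D s'| := by
          rw [key s0, abs_mul, abs_of_nonneg hγ0]
      _ ≤ γ * |D s0| := by
          apply mul_le_mul_of_nonneg_left _ hγ0
          calc |∑ a, pol s0 a * ∑ s', P s0 a s' * D s'|
              ≤ ∑ a, |pol s0 a * ∑ s', P s0 a s' * D s'| :=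
                Finset.abs_sum_le_sum_abs _ _
            _ ≤ ∑ a : A, pol s0 a * |D s0| := by
                apply Finset.sum_le_sum
                intro a _
                rw [abs_mul, abs_of_nonneg ((hpol s0).1 a)]
                exact mul_le_mul_of_nonneg_left (hinner a) ((hpol s0).1 a)
            _ = |D s0| := by rw [← Finset.sum_mul, (hpol s0).2, one_mul]
  have hzero : |D s0| = 0 := by
    nlinarith [abs_nonneg (D s0)]
  have : D s = 0 := by
    have := hbound s
    rw [hzero] at this
    exact abs_eq_zero.mp (le_antisymm this (abs_nonneg _))
  have : V' s - (V s - η * Φ s) = 0 := this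
  linarith
end
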